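/- Let X ≥ 0 be a nonnegative random variable with distribution F, Laplace–Stieltjes transform L(λ) = E[e^{−λX}], and n-th moment m_n = E[X^n] ∈ (0,∞) for some integer n ≥ 1 (so m_k = E[X^k] is finite for 0 ≤ k ≤ n). Let F_{(n)} be the n-th order equilibrium distribution with respect to F. Then its Laplace–Stieltjes transform satisfies L_{(n)}(λ) = ∫₀^∞ e^{−λx} dF_{(n)}(x) = n!·Q_{n−1}(λ)/(m_n·λ^n) for all λ > 0, where Q_{n−1}(λ) = (−1)^{n}·(L(λ) − Σ_{k=0}^{n−1} (−1)^k m_k λ^k/k!). -/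

import Mathlib

open MeasureTheory Real Set Filter
open scoped ENNReal

/-- The `n`-th order equilibrium distribution of a law `ν` on `[0,∞)`:
`F_{(0)} = F`, and `F_{(k+1)}` has density `x ↦ (1 - F_{(k)}(x)) / mean(F_{(k)})` on `[0,∞)`. -/
noncomputable def equilib (ν : Measure ℝ) : ℕ → Measure ℝ
  | 0 => ν
  | k + 1 =>
    (volume.restrict (Ici (0 : ℝ))).withDensity
      (fun x => equilib ν k (Ioi x) / ∫⁻ y, ENNReal.ofReal y ∂(equilib ν k))

noncomputable def Lap (ρ : Measure ℝ) (l : ℝ) : ℝ≥0∞ :=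
  ∫⁻ x, ENNReal.ofReal (Real.exp (-(l * x))) ∂ρ

noncomputable def Mom (ρ : Measure ℝ) (j : ℕ) : ℝ≥0∞ :=
  ∫⁻ x, ENNReal.ofReal (x ^ j) ∂ρ

lemma meas_tail (ρ : Measure ℝ) : Measurable (fun x => ρ (Ioi x)) := by
  apply Antitone.measurable
  intro a b hab
  exact measure_mono (Ioi_subset_Ioi hab)

lemma ae_nonneg_of_supp (ρ : Measure ℝ) (hsupp : ρ (Iio 0) = 0) : ∀ᵐ y ∂ρ, 0 ≤ y := by
  rw [ae_iff]
  convert hsupp using 2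
  ext y
  simp [not_le]

lemma Lap_le_one (ρ : Measure ℝ) [IsProbabilityMeasure ρ] (hsupp : ρ (Iio 0) = 0)
    {l : ℝ} (hl : 0 ≤ l) : Lap ρ l ≤ 1 := by
  have hae := ae_nonneg_of_supp ρ hsupp
  calc Lap ρ l ≤ ∫⁻ _, 1 ∂ρ := by
        refine lintegral_mono_ae (hae.mono fun y hy => ?_)
        rw [ENNReal.ofReal_le_one]
        exact Real.exp_le_one_iff.mpr (by nlinarith)
    _ = 1 := by simp

lemma fubini_step (ρ : Measure ℝ) [IsFiniteMeasure ρ] (g : ℝ → ℝ) (hg : Measurable g) :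
    ∫⁻ x in Ici (0:ℝ), ρ (Ioi x) * ENNReal.ofReal (g x) =
      ∫⁻ y, (∫⁻ x in Ico (0:ℝ) y, ENNReal.ofReal (g x)) ∂ρ := by
  have h1 : ∀ x : ℝ, ρ (Ioi x) * ENNReal.ofReal (g x)
      = ∫⁻ y, (Ioi x).indicator (fun _ => ENNReal.ofReal (g x)) y ∂ρ := by
    intro x
    rw [lintegral_indicator measurableSet_Ioi, setLIntegral_const, mul_comm]
  have hmeas : AEMeasurable (Function.uncurry fun x y =>
      (Ioi x).indicator (fun _ => ENNReal.ofReal (g x)) y)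
      ((volume.restrict (Ici (0:ℝ))).prod ρ) := by
    have heq : (Function.uncurry fun x y => (Ioi x).indicator (fun _ => ENNReal.ofReal (g x)) y)
        = {p : ℝ × ℝ | p.1 < p.2}.indicator (fun p => ENNReal.ofReal (g p.1)) := by
      ext p
      by_cases h : p.1 < p.2 <;>
        simp [Function.uncurry, Set.indicator, h, Set.mem_Ioi]
    rw [heq]
    exact ((ENNReal.measurable_ofReal.comp (hg.comp measurable_fst)).indicator
      (measurableSet_lt measurable_fst measurable_snd)).aemeasurable
  calc ∫⁻ x in Ici (0:ℝ), ρ (Ioi x) * ENNReal.ofReal (g x)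
      = ∫⁻ x in Ici (0:ℝ), ∫⁻ y, (Ioi x).indicator (fun _ => ENNReal.ofReal (g x)) y ∂ρ := by
        simp_rw [h1]
    _ = ∫⁻ y, (∫⁻ x in Ici (0:ℝ), (Ioi x).indicator (fun _ => ENNReal.ofReal (g x)) y) ∂ρ :=
        lintegral_lintegral_swap hmeas
    _ = ∫⁻ y, (∫⁻ x in Ico (0:ℝ) y, ENNReal.ofReal (g x)) ∂ρ := by
        refine lintegral_congr fun y => ?_
        have h2 : ∀ x : ℝ, (Ioi x).indicator (fun _ => ENNReal.ofReal (g x)) y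
            = (Iio y).indicator (fun x => ENNReal.ofReal (g x)) x := by
          intro x
          by_cases h : x < y <;> simp [Set.indicator, h, Set.mem_Ioi, Set.mem_Iio]
        simp_rw [h2]
        rw [lintegral_indicator measurableSet_Iio,
          Measure.restrict_restrict measurableSet_Iio,
          show Iio y ∩ Ici (0:ℝ) = Ico 0 y from by ext x; simp [Set.mem_Ico, and_comm]]

lemma inner_exp {l : ℝ} (hl : 0 < l) {y : ℝ} (hy : 0 ≤ y) :
    ∫⁻ x in Ico (0:ℝ) y, ENNReal.ofReal (Real.exp (-(l * x)))
      = ENNReal.ofReal ((1 - Real.exp (-(l * y))) / l) := by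
  have hcont : Continuous fun x : ℝ => Real.exp (-(l * x)) := by continuity
  rw [← ofReal_integral_eq_lintegral_ofReal]
  · congr 1
    rw [setIntegral_congr_set Ico_ae_eq_Ioc, ← intervalIntegral.integral_of_le hy]
    have hderiv : ∀ x ∈ uIcc (0:ℝ) y,
        HasDerivAt (fun x => -Real.exp (-(l * x)) / l) (Real.exp (-(l * x))) x := by
      intro x _
      have h1 : HasDerivAt (fun x : ℝ => -(l * x)) (-l) x := by
        simpa [Pi.neg_def] using ((hasDerivAt_id x).const_mul l).neg
      have h2 := (Real.hasDerivAt_exp (-(l * x))).comp x h1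
      have h3 := h2.neg.div_const l
      exact h3.congr_deriv (by field_simp)
    rw [intervalIntegral.integral_eq_sub_of_hasDerivAt hderiv
      (hcont.intervalIntegrable 0 y)]
    simp only [mul_zero, neg_zero, Real.exp_zero]
    field_simp
    ring
  · exact (intervalIntegrable_iff_integrableOn_Ico_of_le hy).mp (hcont.intervalIntegrable 0 y)
  · filter_upwards with x using Real.exp_nonneg _

lemma inner_pow (j : ℕ) {y : ℝ} (hy : 0 ≤ y) :
    ∫⁻ x in Ico (0:ℝ) y, ENNReal.ofReal (x ^ j)
      = ENNReal.ofReal (y ^ (j + 1) / ((j:ℝ) + 1)) := by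
  rw [← ofReal_integral_eq_lintegral_ofReal]
  · congr 1
    rw [setIntegral_congr_set Ico_ae_eq_Ioc, ← intervalIntegral.integral_of_le hy,
      integral_pow]
    simp
  · exact (intervalIntegrable_iff_integrableOn_Ico_of_le hy).mp
      ((continuous_pow j).intervalIntegrable 0 y)
  · filter_upwards [ae_restrict_mem measurableSet_Ico] with x hx
    exact pow_nonneg hx.1 j

lemma inner_one (y : ℝ) :
    ∫⁻ x in Ico (0:ℝ) y, ENNReal.ofReal ((1:ℝ)) = ENNReal.ofReal y := by
  rcases le_or_gt 0 y with hy | hy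
  · simp [setLIntegral_const, Real.volume_Ico]
  · rw [Ico_eq_empty (by linarith)]
    simp [ENNReal.ofReal_of_nonpos hy.le]

noncomputable def rstep (ρ : Measure ℝ) : Measure ℝ :=
  (volume.restrict (Ici (0 : ℝ))).withDensity
    (fun x => ρ (Ioi x) / ∫⁻ y, ENNReal.ofReal y ∂ρ)

lemma withDensity_lintegral (ρ : Measure ℝ) [IsFiniteMeasure ρ] (g : ℝ → ℝ)
    (hg : Measurable g) :
    ∫⁻ x, ENNReal.ofReal (g x) ∂(rstep ρ)
      = (∫⁻ y, (∫⁻ x in Ico (0:ℝ) y, ENNReal.ofReal (g x)) ∂ρ)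
          / ∫⁻ y, ENNReal.ofReal y ∂ρ := by
  rw [rstep, lintegral_withDensity_eq_lintegral_mul _
      (f := fun x => ρ (Ioi x) / ∫⁻ y, ENNReal.ofReal y ∂ρ)
      (by exact (meas_tail ρ).div measurable_const)
    (g := fun x => ENNReal.ofReal (g x)) (by fun_prop)]
  have h : ∀ x : ℝ, ((fun x => ρ (Ioi x) / ∫⁻ y, ENNReal.ofReal y ∂ρ)
        * fun x => ENNReal.ofReal (g x)) x
      = (ρ (Ioi x) * ENNReal.ofReal (g x)) * (∫⁻ y, ENNReal.ofReal y ∂ρ)⁻¹ := by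
    intro x
    simp only [Pi.mul_apply, div_eq_mul_inv]
    ring
  simp_rw [h]
  have hg' : Measurable fun x => ENNReal.ofReal (g x) := by fun_prop
  rw [lintegral_mul_const _ (f := fun x => ρ (Ioi x) * ENNReal.ofReal (g x))
      (by exact (meas_tail ρ).mul hg'),
    fubini_step ρ g hg, ← div_eq_mul_inv]

lemma rstep_mass (ρ : Measure ℝ) [IsProbabilityMeasure ρ]
    (hm0 : (∫⁻ y, ENNReal.ofReal y ∂ρ) ≠ 0) (hmtop : (∫⁻ y, ENNReal.ofReal y ∂ρ) ≠ ⊤) :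
    IsProbabilityMeasure (rstep ρ) := by
  constructor
  have h1 : rstep ρ univ = ∫⁻ x, ENNReal.ofReal ((1:ℝ)) ∂(rstep ρ) := by simp
  rw [h1, withDensity_lintegral ρ _ measurable_const]
  simp_rw [inner_one]
  exact ENNReal.div_self hm0 hmtop

lemma rstep_supp (ρ : Measure ℝ) : rstep ρ (Iio 0) = 0 := by
  rw [rstep, withDensity_apply _ measurableSet_Iio,
    Measure.restrict_restrict measurableSet_Iio,
    show Iio (0:ℝ) ∩ Ici 0 = ∅ from by ext x; simp]
  simp

lemma rstep_Mom (ρ : Measure ℝ) [IsProbabilityMeasure ρ] (hsupp : ρ (Iio 0) = 0) (j : ℕ) :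
    Mom (rstep ρ) j = Mom ρ (j+1)
      / (ENNReal.ofReal ((j:ℝ) + 1) * ∫⁻ y, ENNReal.ofReal y ∂ρ) := by
  rw [show Mom (rstep ρ) j = ∫⁻ x, ENNReal.ofReal (x ^ j) ∂(rstep ρ) from rfl,
    withDensity_lintegral ρ (fun x => x ^ j) (by fun_prop)]
  have hae := ae_nonneg_of_supp ρ hsupp
  rw [lintegral_congr_ae (hae.mono fun y hy => inner_pow j hy)]
  have h3 : ∀ y : ℝ, ENNReal.ofReal (y ^ (j+1) / ((j:ℝ) + 1))
      = ENNReal.ofReal (y ^ (j+1)) * (ENNReal.ofReal ((j:ℝ) + 1))⁻¹ := by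
    intro y
    rw [ENNReal.ofReal_div_of_pos (by positivity), div_eq_mul_inv]
  simp_rw [h3]
  rw [lintegral_mul_const _ (by fun_prop),
    show (∫⁻ y, ENNReal.ofReal (y ^ (j+1)) ∂ρ) = Mom ρ (j+1) from rfl,
    div_eq_mul_inv, div_eq_mul_inv, mul_assoc,
    ← ENNReal.mul_inv (Or.inl (by simp; positivity)) (Or.inl ENNReal.ofReal_ne_top)]

lemma rstep_Lap (ρ : Measure ℝ) [IsProbabilityMeasure ρ] (hsupp : ρ (Iio 0) = 0)
    {l : ℝ} (hl : 0 < l) :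
    Lap (rstep ρ) l = (1 - Lap ρ l)
      / (ENNReal.ofReal l * ∫⁻ y, ENNReal.ofReal y ∂ρ) := by
  rw [show Lap (rstep ρ) l = ∫⁻ x, ENNReal.ofReal (Real.exp (-(l * x))) ∂(rstep ρ) from rfl,
    withDensity_lintegral ρ (fun x => Real.exp (-(l * x))) (by fun_prop)]
  have hae := ae_nonneg_of_supp ρ hsupp
  rw [lintegral_congr_ae (hae.mono fun y hy => inner_exp hl hy)]
  have h3 : ∀ y : ℝ, ENNReal.ofReal ((1 - Real.exp (-(l * y))) / l)
      = (1 - ENNReal.ofReal (Real.exp (-(l * y)))) * (ENNReal.ofReal l)⁻¹ := by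
    intro y
    rw [ENNReal.ofReal_div_of_pos hl, ENNReal.ofReal_sub _ (Real.exp_nonneg _),
      ENNReal.ofReal_one, div_eq_mul_inv]
  simp_rw [h3]
  rw [lintegral_mul_const _ (by fun_prop),
    lintegral_sub (by fun_prop) (lt_of_le_of_lt (Lap_le_one ρ hsupp hl.le) (by simp)).ne
      (hae.mono fun y hy => by
        rw [ENNReal.ofReal_le_one]
        exact Real.exp_le_one_iff.mpr (by nlinarith)),
    lintegral_one, measure_univ, div_eq_mul_inv, div_eq_mul_inv, mul_assoc,
    ← ENNReal.mul_inv (Or.inl (by simp [hl])) (Or.inl ENNReal.ofReal_ne_top)]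
  rfl

theorem stmt19 {Ω : Type*} [MeasurableSpace Ω] (μ : Measure Ω) [IsProbabilityMeasure μ]
    (X : Ω → ℝ) (hX : Measurable X) (hXnn : ∀ ω, 0 ≤ X ω)
    (n : ℕ) (hn : 1 ≤ n)
    (hmn_int : Integrable (fun ω => X ω ^ n) μ) (hmn_pos : 0 < ∫ ω, X ω ^ n ∂μ) :
    ∀ l : ℝ, 0 < l →
      ∫ x, Real.exp (-(l * x)) ∂(equilib (Measure.map X μ) n)
        = (Nat.factorial n)
            * ((-1 : ℝ) ^ n *
                ((∫ ω, Real.exp (-(l * X ω)) ∂μ)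
                  - ∑ k ∈ Finset.range n,
                      (-1 : ℝ) ^ k * (∫ ω, X ω ^ k ∂μ) * l ^ k / (Nat.factorial k)))
            / ((∫ ω, X ω ^ n ∂μ) * l ^ n) := by
  intro l hl
  set ν : Measure ℝ := Measure.map X μ with hν
  -- integrability of all moments up to n
  have hint : ∀ k ≤ n, Integrable (fun ω => X ω ^ k) μ := by
    intro k hk
    refine Integrable.mono' ((integrable_const (1:ℝ)).add hmn_int)
      ((hX.pow_const k).aestronglyMeasurable) ?_
    filter_upwards with ω
    have h0 := hXnn ω
    rw [Real.norm_eq_abs, abs_of_nonneg (pow_nonneg h0 k)]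
    rcases le_total (X ω) 1 with h | h
    · have h1 : X ω ^ k ≤ 1 := pow_le_one₀ h0 h
      have h2 : (0:ℝ) ≤ X ω ^ n := pow_nonneg h0 n
      simpa using by linarith
    · have h1 : X ω ^ k ≤ X ω ^ n := pow_le_pow_right₀ h hk
      simpa using by linarith
  set M : ℕ → ℝ := fun k => ∫ ω, X ω ^ k ∂μ with hMdef
  have hM0 : M 0 = 1 := by simp [hMdef]
  have hMnn : ∀ k, 0 ≤ M k := fun k => integral_nonneg fun ω => pow_nonneg (hXnn ω) k
  have hMpos : ∀ k ≤ n, 0 < M k := by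
    intro k hk
    rcases Nat.eq_zero_or_pos k with rfl | hkpos
    · simp [hM0]
    rcases (hMnn k).lt_or_eq with h | h
    · exact h
    exfalso
    have hz : (fun ω => X ω ^ k) =ᵐ[μ] 0 :=
      (integral_eq_zero_iff_of_nonneg (fun ω => pow_nonneg (hXnn ω) k) (hint k hk)).mp h.symm
    have hzn : (fun ω => X ω ^ n) =ᵐ[μ] 0 := by
      filter_upwards [hz] with ω hω
      have hx0 : X ω = 0 := by
        have hω' : X ω ^ k = 0 := hω
        exact (pow_eq_zero_iff (by omega : k ≠ 0)).mp hω'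
      simp [hx0, zero_pow (by omega : n ≠ 0)]
    have : (∫ ω, X ω ^ n ∂μ) = 0 := by
      rw [integral_congr_ae hzn]
      simp
    linarith
  have hνprob : IsProbabilityMeasure ν := Measure.isProbabilityMeasure_map hX.aemeasurable
  have hνsupp : ν (Iio 0) = 0 := by
    rw [hν, Measure.map_apply hX measurableSet_Iio]
    have : X ⁻¹' (Iio 0) = ∅ := by
      ext ω
      simp [not_lt.mpr (hXnn ω)]
    rw [this, measure_empty]
  have hMom : ∀ k ≤ n, Mom ν k = ENNReal.ofReal (M k) := by
    intro k hk
    rw [show Mom ν k = ∫⁻ x, ENNReal.ofReal (x ^ k) ∂ν from rfl, hν,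
      lintegral_map (by fun_prop) hX,
      ← ofReal_integral_eq_lintegral_ofReal (hint k hk)
        (Eventually.of_forall fun ω => pow_nonneg (hXnn ω) k)]
  have hLint : Integrable (fun ω => Real.exp (-(l * X ω))) μ := by
    refine Integrable.mono' (integrable_const (1:ℝ))
      ((Real.measurable_exp.comp ((hX.const_mul l).neg)).aestronglyMeasurable) ?_
    filter_upwards with ω
    rw [Real.norm_eq_abs, abs_of_nonneg (Real.exp_nonneg _)]
    exact Real.exp_le_one_iff.mpr (by nlinarith [hXnn ω, hl.le])
  have hLap0 : Lap ν l = ENNReal.ofReal (∫ ω, Real.exp (-(l * X ω)) ∂μ) := by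
    rw [show Lap ν l = ∫⁻ x, ENNReal.ofReal (Real.exp (-(l * x))) ∂ν from rfl, hν,
      lintegral_map (by fun_prop) hX,
      ← ofReal_integral_eq_lintegral_ofReal hLint
        (Eventually.of_forall fun ω => Real.exp_nonneg _)]
  have key : ∀ k, k ≤ n →
      IsProbabilityMeasure (equilib ν k) ∧ (equilib ν k) (Iio 0) = 0 ∧
      (∀ j, j + k ≤ n → Mom (equilib ν k) j
          = ENNReal.ofReal (M (j+k) * (Nat.factorial j) * (Nat.factorial k)
              / ((Nat.factorial (j+k)) * M k))) ∧
      (Lap (equilib ν k) l).toReal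
          = (Nat.factorial k) * ((-1:ℝ)^k * ((∫ ω, Real.exp (-(l * X ω)) ∂μ)
              - ∑ i ∈ Finset.range k, (-1:ℝ)^i * M i * l^i / (Nat.factorial i)))
            / (M k * l^k) := by
    intro k
    induction k with
    | zero =>
      intro _
      refine ⟨hνprob, hνsupp, ?_, ?_⟩
      · intro j hj
        rw [show equilib ν 0 = ν from rfl, hMom j (by omega)]
        congr 1
        have hfj : (0:ℝ) < Nat.factorial j := by positivity
        simp only [Nat.add_zero, Nat.factorial_zero, Nat.cast_one, mul_one, hM0]
        field_simp
      · rw [show equilib ν 0 = ν from rfl, hLap0,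
          ENNReal.toReal_ofReal (integral_nonneg fun ω => Real.exp_nonneg _)]
        simp [hM0]
    | succ k ih =>
      intro hk1
      obtain ⟨hprob, hsupp, hmom, hlap⟩ := ih (by omega)
      haveI := hprob
      have hMkpos : 0 < M k := hMpos k (by omega)
      have hMk1pos : 0 < M (k+1) := hMpos (k+1) hk1
      have hmcpos : 0 < M (k+1) / (((k:ℝ)+1) * M k) := by positivity
      have hmmean : (∫⁻ y, ENNReal.ofReal y ∂(equilib ν k))
          = ENNReal.ofReal (M (k+1) / (((k:ℝ)+1) * M k)) := by
        have h1 := hmom 1 (by omega)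
        have h2 : (∫⁻ y, ENNReal.ofReal y ∂(equilib ν k)) = Mom (equilib ν k) 1 := by
          rw [show Mom (equilib ν k) 1 = ∫⁻ x, ENNReal.ofReal (x ^ 1) ∂(equilib ν k) from rfl]
          simp
        rw [h2, h1]
        congr 1
        rw [show 1 + k = k + 1 from by omega, Nat.factorial_one, Nat.factorial_succ]
        have hfk : (0:ℝ) < Nat.factorial k := by positivity
        push_cast
        field_simp
      have hm0 : (∫⁻ y, ENNReal.ofReal y ∂(equilib ν k)) ≠ 0 := by
        rw [hmmean]
        simp only [ne_eq, ENNReal.ofReal_eq_zero, not_le]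
        exact hmcpos
      have hmtop : (∫⁻ y, ENNReal.ofReal y ∂(equilib ν k)) ≠ ⊤ := by
        rw [hmmean]; exact ENNReal.ofReal_ne_top
      have hstep : equilib ν (k+1) = rstep (equilib ν k) := rfl
      refine ⟨hstep ▸ rstep_mass (equilib ν k) hm0 hmtop, hstep ▸ rstep_supp (equilib ν k), ?_, ?_⟩
      · intro j hj
        rw [hstep, rstep_Mom (equilib ν k) hsupp j, hmom (j+1) (by omega), hmmean,
          ← ENNReal.ofReal_mul (by positivity),
          ← ENNReal.ofReal_div_of_pos (by positivity)]
        congr 1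
        rw [show j + 1 + k = j + (k+1) from by omega, Nat.factorial_succ j, Nat.factorial_succ k]
        have hfj : (0:ℝ) < Nat.factorial j := by positivity
        have hfk : (0:ℝ) < Nat.factorial k := by positivity
        have hfjk : (0:ℝ) < Nat.factorial (j + (k+1)) := by positivity
        push_cast
        field_simp
      · rw [hstep, rstep_Lap (equilib ν k) hsupp hl, ENNReal.toReal_div,
          ENNReal.toReal_sub_of_le (Lap_le_one (equilib ν k) hsupp hl.le) ENNReal.one_ne_top,
          ENNReal.toReal_one, ENNReal.toReal_mul, ENNReal.toReal_ofReal hl.le, hmmean,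
          ENNReal.toReal_ofReal hmcpos.le, hlap, Finset.sum_range_succ, Nat.factorial_succ]
        have hfk : (0:ℝ) < Nat.factorial k := by positivity
        have hlk : (0:ℝ) < l ^ k := by positivity
        push_cast
        rw [pow_succ, pow_succ]
        rcases Nat.even_or_odd k with hpar | hpar
        · rw [hpar.neg_one_pow]
          field_simp
          ring
        · rw [hpar.neg_one_pow]
          field_simp
          ring
  obtain ⟨hprobn, hsuppn, _, hfinal⟩ := key n le_rfl
  haveI := hprobn
  have hconv : ∫ x, Real.exp (-(l * x)) ∂(equilib ν n) = (Lap (equilib ν n) l).toReal := by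
    have hInt : Integrable (fun x => Real.exp (-(l * x))) (equilib ν n) := by
      refine Integrable.mono' (integrable_const (1:ℝ))
        ((Real.measurable_exp.comp ((measurable_id.const_mul l).neg)).aestronglyMeasurable) ?_
      filter_upwards [ae_nonneg_of_supp _ hsuppn] with x hx
      rw [Real.norm_eq_abs, abs_of_nonneg (Real.exp_nonneg _)]
      exact Real.exp_le_one_iff.mpr (by nlinarith [hl.le])
    rw [show Lap (equilib ν n) l
        = ∫⁻ x, ENNReal.ofReal (Real.exp (-(l * x))) ∂(equilib ν n) from rfl,
      ← ofReal_integral_eq_lintegral_ofReal hInt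
        (Eventually.of_forall fun x => Real.exp_nonneg _),
      ENNReal.toReal_ofReal (integral_nonneg fun x => Real.exp_nonneg _)]
  rw [hconv, hfinal]
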